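/- arXiv:2403.19621 — 2 statements merged into one kernel-verified Lean document; each statement's English description precedes it below -/
import Mathlib

section
/- Fix an integer m ≥ 2 and a positive integer D that is not the m-th power of an integer. Consider the Hénon maps f(x,y) = (y, x + y^{m+1}) and g(x,y) = (y, x + D·y^{m+1}). Then f and g are conjugate by a polynomial automorphism of ℂ² with coefficients in ℚ(D^{1/m}) — namely h(x,y) = (αx, αy) with α^m = 1/D satisfies h ∘ f = g ∘ h — but there is no polynomial automorphism with all coefficients in ℚ conjugating f to g. -/
open Filter MvPolynomial

noncomputable section

/-- A map `ℂ² → ℂ²` given coordinatewise by polynomials in `ℂ[x,y]`. -/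
def IsPolyMap (φ : ℂ × ℂ → ℂ × ℂ) : Prop :=
  ∃ P Q : MvPolynomial (Fin 2) ℂ,
    ∀ p : ℂ × ℂ, φ p = (eval ![p.1, p.2] P, eval ![p.1, p.2] Q)

/-- A polynomial automorphism of `ℂ²`: a bijection such that both it and its
inverse are given coordinatewise by polynomials. -/
def IsPolyAuto (φ : ℂ × ℂ → ℂ × ℂ) : Prop :=
  IsPolyMap φ ∧ ∃ ψ : ℂ × ℂ → ℂ × ℂ, IsPolyMap ψ ∧
    Function.LeftInverse ψ φ ∧ Function.RightInverse ψ φ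

/-- The degree of a polynomial map of `ℂ²`: the maximum of the total degrees of
its two coordinate polynomials. -/
def polyDeg (φ : ℂ × ℂ → ℂ × ℂ) : ℕ :=
  sInf { d : ℕ | ∃ P Q : MvPolynomial (Fin 2) ℂ,
    (∀ p : ℂ × ℂ, φ p = (eval ![p.1, p.2] P, eval ![p.1, p.2] Q)) ∧
    d = max P.totalDegree Q.totalDegree }

/-- The dynamical degree `λ₁(f) = lim_{n→∞} deg(fⁿ)^{1/n}` (the limit exists,
so it coincides with the `limsup`). -/
def dynDeg (f : ℂ × ℂ → ℂ × ℂ) : ℝ :=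
  Filter.limsup (fun n : ℕ => (polyDeg (f^[n]) : ℝ) ^ ((n : ℝ)⁻¹)) Filter.atTop

/-- A loxodromic polynomial automorphism: dynamical degree `> 1`. -/
def IsLoxodromic (f : ℂ × ℂ → ℂ × ℂ) : Prop :=
  IsPolyAuto f ∧ 1 < dynDeg f

/-- The Euclidean norm on `ℂ²`. -/
def eNorm (p : ℂ × ℂ) : ℝ := Real.sqrt (‖p.1‖ ^ 2 + ‖p.2‖ ^ 2)

/-- `log⁺ t = max (log t) 0`. -/
def logPlus (t : ℝ) : ℝ := max (Real.log t) 0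

/-- An elementary Hénon map `(x, y) ↦ (a y + p(x), x)` with `a ≠ 0` and `deg p ≥ 2`. -/
def IsElementaryHenon (f : ℂ × ℂ → ℂ × ℂ) : Prop :=
  ∃ (a : ℂ) (p : Polynomial ℂ), a ≠ 0 ∧ 2 ≤ p.natDegree ∧
    ∀ q : ℂ × ℂ, f q = (a * q.2 + p.eval q.1, q.1)

/-- A generalized Hénon map: a (nonempty) finite composition of elementary Hénon maps. -/
def IsHenon (f : ℂ × ℂ → ℂ × ℂ) : Prop :=
  ∃ l : List (ℂ × ℂ → ℂ × ℂ), l ≠ [] ∧ (∀ h ∈ l, IsElementaryHenon h) ∧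
    f = l.foldr (· ∘ ·) id

/-- `K_f⁺`: the set of points with bounded forward orbit. -/
def Kplus (f : ℂ × ℂ → ℂ × ℂ) : Set (ℂ × ℂ) :=
  { p | Bornology.IsBounded (Set.range fun n : ℕ => f^[n] p) }

/-- `K_f⁻`: the set of points with bounded backward orbit. -/
def Kminus (f : ℂ × ℂ → ℂ × ℂ) : Set (ℂ × ℂ) :=
  { p | Bornology.IsBounded (Set.range fun n : ℕ => (Function.invFun f)^[n] p) }

/-- A polynomial map all of whose coefficients lie in the subset `S ⊆ ℂ`. -/
def IsPolyMapOver (S : Set ℂ) (φ : ℂ × ℂ → ℂ × ℂ) : Prop :=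
  ∃ P Q : MvPolynomial (Fin 2) ℂ,
    (∀ p : ℂ × ℂ, φ p = (eval ![p.1, p.2] P, eval ![p.1, p.2] Q)) ∧
    (∀ m, coeff m P ∈ S) ∧ (∀ m, coeff m Q ∈ S)

/-- A polynomial automorphism defined over `S`: the coordinate polynomials of both
it and its inverse have all their coefficients in `S`. -/
def IsPolyAutoOver (S : Set ℂ) (φ : ℂ × ℂ → ℂ × ℂ) : Prop :=
  IsPolyMapOver S φ ∧ ∃ ψ : ℂ × ℂ → ℂ × ℂ, IsPolyMapOver S ψ ∧
    Function.LeftInverse ψ φ ∧ Function.RightInverse ψ φ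

/-!
The scaling `h(x, y) = (αx, αy)` multiplies the nonlinear term of `f` by `α^m`, so `α^m = 1/D`
conjugates `f` to `g`. Conversely, write a rational conjugacy as `ψ = (P, Q)` and let `F` be the
pullback `p ↦ p ∘ f`; then `Q = F P` and `F (F P) = P + D (F P)ⁿ` with `n = m + 1`.
Give `x` and `y` the weights `1` and `n`. The component of `F p` of weighted degree `n · deg p` is
`c(p) · y^(deg p)`, where `c(p)` is the sum of the top-degree coefficients of `p`. If
`deg P ≤ deg (F P)`, the components of weighted degree `n · deg (F P)` of the relation read
`c(F P) · y^(deg (F P)) = D · ℓⁿ` with `ℓ ≠ 0` the top component of `F P`, and evaluating at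
`(1, 1)` gives `c = D cⁿ` for some nonzero `c ∈ ℚ`. Otherwise `deg (F P) < deg P` and `F P`
satisfies the same relation, so descent on the degree forces the first case. Then
`D = (1/c)^m` with `1/c` rational, hence an integer.
-/

section HenonPullback

open scoped Polynomial

variable {R : Type*} [CommRing R]

def henonPullback (n : ℕ) : MvPolynomial (Fin 2) R →ₐ[R] MvPolynomial (Fin 2) R :=
  aeval ![X 1, X 0 + X 1 ^ n]

/-- `p(x, y) ↦ p(t x, tⁿ y)`, a polynomial in `t` whose `natDegree` is the weighted degree of `p`
for the weights `(1, n)`. -/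
def weightScale (n : ℕ) : MvPolynomial (Fin 2) R →ₐ[R] (MvPolynomial (Fin 2) R)[X] :=
  aeval ![Polynomial.C (X 0) * Polynomial.X, Polynomial.C (X 1) * Polynomial.X ^ n]

variable {n : ℕ}

@[simp]
lemma weightScale_C (c : R) : weightScale n (C c) = Polynomial.C (C c) := by
  simp [weightScale, Polynomial.algebraMap_apply]

@[simp]
lemma henonPullback_C (c : R) : henonPullback n (C c) = C c := by
  simp [henonPullback]

lemma monomial_eq_C_mul_X_pow_mul_X_pow (d : Fin 2 →₀ ℕ) (c : R) :
    monomial d c = C c * X 0 ^ d 0 * X 1 ^ d 1 := by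
  rw [monomial_eq, Finsupp.prod_fintype _ _ fun _ ↦ pow_zero _, Fin.prod_univ_two, mul_assoc]

lemma weightScale_monomial (d : Fin 2 →₀ ℕ) (c : R) :
    weightScale n (monomial d c) =
      Polynomial.C (monomial d c) * Polynomial.X ^ (d 0 + n * d 1) := by
  rw [monomial_eq_C_mul_X_pow_mul_X_pow]
  simp only [weightScale, map_mul, map_pow, aeval_X, aeval_C, Matrix.cons_val_zero,
    Matrix.cons_val_one, Polynomial.algebraMap_apply, algebraMap_eq]
  simp only [mul_pow, ← pow_mul, ← Polynomial.C_pow, pow_add]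
  ring

lemma coeff_coeff_weightScale (p : MvPolynomial (Fin 2) R) (d : Fin 2 →₀ ℕ) (k : ℕ) :
    coeff d ((weightScale n p).coeff k) = if d 0 + n * d 1 = k then coeff d p else 0 := by
  induction p using MvPolynomial.induction_on' with
  | monomial e c =>
    rw [weightScale_monomial, Polynomial.coeff_C_mul_X_pow, apply_ite (coeff d), coeff_monomial,
      coeff_zero]
    split_ifs <;> grind
  | add p q hp hq =>
    rw [map_add, Polynomial.coeff_add, coeff_add, hp, hq, coeff_add]
    split_ifs <;> simp

lemma weight_le_natDegree_weightScale {p : MvPolynomial (Fin 2) R} {d : Fin 2 →₀ ℕ}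
    (hd : coeff d p ≠ 0) : d 0 + n * d 1 ≤ (weightScale n p).natDegree := by
  refine Polynomial.le_natDegree_of_ne_zero fun h ↦ hd ?_
  simpa using (coeff_coeff_weightScale p d _).symm.trans (congrArg (coeff d) h)

lemma natDegree_weightScale_pos (hn : 0 < n) {p : MvPolynomial (Fin 2) R}
    (hp : ∀ c, p ≠ C c) : 0 < (weightScale n p).natDegree := by
  obtain ⟨d, hd⟩ : ∃ d, coeff d p ≠ coeff d (C (coeff 0 p)) := by
    by_contra! h
    exact hp _ (MvPolynomial.ext _ _ h)
  have hd0 : d ≠ 0 := by rintro rfl; simp at hd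
  have hne : coeff d p ≠ 0 := by simpa [coeff_C, Ne.symm hd0] using hd
  have hw : 0 < d 0 + n * d 1 := by
    by_contra! h
    exact hd0 (Finsupp.ext fun i ↦ by fin_cases i <;> simp <;> nlinarith)
  exact hw.trans_le (weight_le_natDegree_weightScale hne)

lemma weightScale_henonPullback_monomial (d : Fin 2 →₀ ℕ) (c : R) :
    weightScale n (henonPullback n (monomial d c)) =
      Polynomial.C (C c) * (Polynomial.C (X 1) * Polynomial.X ^ n) ^ d 0 *
        (Polynomial.C (X 0) * Polynomial.X +
          (Polynomial.C (X 1) * Polynomial.X ^ n) ^ n) ^ d 1 := by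
  simp [monomial_eq_C_mul_X_pow_mul_X_pow, henonPullback, weightScale, Polynomial.algebraMap_apply]

lemma natDegree_weightScale_henonPullback_monomial_le (hn : 0 < n) (d : Fin 2 →₀ ℕ) (c : R) :
    (weightScale n (henonPullback n (monomial d c))).natDegree ≤ n * (d 0 + n * d 1) := by
  rw [weightScale_henonPullback_monomial]
  compute_degree
  rw [max_eq_right (Nat.one_le_iff_ne_zero.2 (by positivity))]
  linarith

lemma coeff_weightScale_henonPullback_monomial (hn : 2 ≤ n) (d : Fin 2 →₀ ℕ) (c : R) :
    (weightScale n (henonPullback n (monomial d c))).coeff (n * (d 0 + n * d 1)) =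
      C c * X 1 ^ (d 0 + n * d 1) := by
  have hA : (Polynomial.C (X 1 : MvPolynomial (Fin 2) R) * Polynomial.X ^ n).natDegree ≤ n := by
    compute_degree
  have hB : (Polynomial.C (X 0 : MvPolynomial (Fin 2) R) * Polynomial.X +
      (Polynomial.C (X 1) * Polynomial.X ^ n) ^ n).natDegree ≤ n * n := by
    compute_degree
    rw [max_le_iff]
    constructor <;> nlinarith
  have hn1 : 1 ≠ n * n := by nlinarith
  rw [weightScale_henonPullback_monomial, mul_assoc, Polynomial.coeff_C_mul,
    show n * (d 0 + n * d 1) = d 0 * n + d 1 * (n * n) by ring,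
    Polynomial.coeff_mul_add_eq_of_natDegree_le (Polynomial.natDegree_pow_le_of_le _ hA)
      (Polynomial.natDegree_pow_le_of_le _ hB),
    Polynomial.coeff_pow_of_natDegree_le hA, Polynomial.coeff_pow_of_natDegree_le hB]
  simp [mul_pow, ← pow_mul, Polynomial.coeff_X, hn1, pow_add, ← map_pow]

lemma coeff_weightScale_henonPullback (hn : 2 ≤ n) {p : MvPolynomial (Fin 2) R} {N : ℕ}
    (hN : ∀ d ∈ p.support, d 0 + n * d 1 ≤ N) :
    (weightScale n (henonPullback n p)).coeff (n * N) =
      C (eval 1 ((weightScale n p).coeff N)) * X 1 ^ N := by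
  conv_lhs => rw [p.as_sum]
  conv_rhs => rw [p.as_sum]
  simp only [map_sum, Polynomial.finsetSum_coeff, Finset.sum_mul]
  refine Finset.sum_congr rfl fun d hd ↦ ?_
  rw [weightScale_monomial, Polynomial.coeff_C_mul_X_pow]
  rcases (hN d hd).lt_or_eq with hlt | rfl
  · rw [if_neg hlt.ne', map_zero, map_zero, zero_mul]
    refine Polynomial.coeff_eq_zero_of_natDegree_lt
      ((natDegree_weightScale_henonPullback_monomial_le (by omega) d _).trans_lt ?_)
    exact Nat.mul_lt_mul_of_pos_left hlt (by omega)
  · rw [if_pos rfl, coeff_weightScale_henonPullback_monomial hn, eval_monomial]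
    simp

lemma henonPullback_ne_C {D : R} {p : MvPolynomial (Fin 2) R} (hp : ∀ c, p ≠ C c)
    (h : henonPullback n (henonPullback n p) = p + C D * henonPullback n p ^ n) :
    ∀ c, henonPullback n p ≠ C c := by
  intro c hc
  refine hp (c - D * c ^ n) ?_
  rw [hc, henonPullback_C] at h
  rw [map_sub, map_mul, map_pow]
  linear_combination -h

variable [IsDomain R]

lemma natDegree_weightScale_henonPullback_lt (hn : 2 ≤ n) {D : R} (hD : D ≠ 0)
    (hDc : ∀ c : R, D * c ^ (n - 1) ≠ 1) {p : MvPolynomial (Fin 2) R} (hp : ∀ c, p ≠ C c)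
    (h : henonPullback n (henonPullback n p) = p + C D * henonPullback n p ^ n) :
    (weightScale n (henonPullback n p)).natDegree < (weightScale n p).natDegree := by
  set q := henonPullback n p
  set e := (weightScale n q).natDegree
  have he : 0 < e := natDegree_weightScale_pos (by omega) (henonPullback_ne_C hp h)
  by_contra! hle
  have hlt : (weightScale n p).natDegree < n * e := by nlinarith
  set ℓ := (weightScale n q).coeff e
  have hℓ : ℓ ≠ 0 := Polynomial.leadingCoeff_ne_zero.mpr (by rintro h0; simp [e, h0] at he)
  have hcoeff : C (eval 1 ℓ) * X 1 ^ e = C D * ℓ ^ n := by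
    have := congrArg (fun r ↦ (weightScale n r).coeff (n * e)) h
    rwa [coeff_weightScale_henonPullback hn fun d hd ↦
        weight_le_natDegree_weightScale (mem_support_iff.mp hd),
      map_add, map_mul, map_pow, Polynomial.coeff_add,
      Polynomial.coeff_eq_zero_of_natDegree_lt hlt, zero_add, weightScale_C,
      Polynomial.coeff_C_mul, Polynomial.coeff_pow_of_natDegree_le le_rfl] at this
  have hc := congrArg (eval 1) hcoeff
  simp only [map_mul, map_pow, eval_C, eval_X, Pi.one_apply, one_pow, mul_one] at hc
  have hc0 : eval 1 ℓ ≠ 0 := by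
    rintro h0
    rw [h0, map_zero, zero_mul] at hcoeff
    exact mul_ne_zero (C_ne_zero.mpr hD) (pow_ne_zero n hℓ) hcoeff.symm
  refine hDc (eval 1 ℓ) (mul_right_cancel₀ hc0 ?_)
  rw [mul_assoc, ← pow_succ, Nat.sub_add_cancel (by omega), one_mul, ← hc]

theorem exists_mul_pow_eq_one_of_henonPullback (hn : 2 ≤ n) {D : R} (hD : D ≠ 0)
    {p : MvPolynomial (Fin 2) R} (hp : ∀ c, p ≠ C c)
    (h : henonPullback n (henonPullback n p) = p + C D * henonPullback n p ^ n) :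
    ∃ c : R, D * c ^ (n - 1) = 1 := by
  by_contra! hDc
  induction hk : (weightScale n p).natDegree using Nat.strong_induction_on generalizing p with
  | _ k ih =>
    exact ih _ (hk ▸ natDegree_weightScale_henonPullback_lt hn hD hDc hp h)
      (henonPullback_ne_C hp h) (by simpa using congrArg (henonPullback n) h) rfl

end HenonPullback

lemma map_henonPullback {R S : Type*} [CommRing R] [CommRing S] (φ : R →+* S) (n : ℕ)
    (p : MvPolynomial (Fin 2) R) : map φ (henonPullback n p) = henonPullback n (map φ p) := by
  induction p using MvPolynomial.induction_on with
  | C a => simp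
  | add p q hp hq => simp only [map_add, hp, hq]
  | mul_X p i hp =>
    rw [map_mul, map_mul, map_mul, hp, map_X]
    fin_cases i <;> simp [henonPullback]

lemma eval_henonPullback {R : Type*} [CommRing R] (n : ℕ) (x : Fin 2 → R)
    (p : MvPolynomial (Fin 2) R) : eval x (henonPullback n p) = eval ![x 1, x 0 + x 1 ^ n] p := by
  rw [henonPullback, aeval_eq_bind₁]
  refine (eval₂Hom_bind₁ _ _ _ _).trans (congrArg (eval · p) ?_)
  ext i
  fin_cases i <;> simp

lemma henonPullback_eq_of_comp_eq {K : Type*} [Field K] [Infinite K] {n : ℕ} {D : K}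
    {ψ : K × K → K × K} {P Q : MvPolynomial (Fin 2) K}
    (hψ : ∀ p, ψ p = (eval ![p.1, p.2] P, eval ![p.1, p.2] Q))
    (hconj : ψ ∘ (fun p ↦ (p.2, p.1 + p.2 ^ n)) = (fun p ↦ (p.2, p.1 + D * p.2 ^ n)) ∘ ψ) :
    henonPullback n P = Q ∧ henonPullback n Q = P + C D * Q ^ n := by
  have hpt (x : Fin 2 → K) := congrFun hconj (x 0, x 1)
  have hx (x : Fin 2 → K) : ![x 0, x 1] = x := by ext i; fin_cases i <;> rfl
  simp only [Function.comp_apply, hψ, Prod.mk.injEq, hx] at hpt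
  constructor <;> refine MvPolynomial.funext fun x ↦ ?_ <;> simp [eval_henonPullback, hpt]

lemma isPolyMapOver_smul {S : Set ℂ} (h0 : (0 : ℂ) ∈ S) {a : ℂ} (ha : a ∈ S) :
    IsPolyMapOver S fun p ↦ (a * p.1, a * p.2) := by
  have hcoeff (i : Fin 2) (d : Fin 2 →₀ ℕ) : coeff d (C a * X i) ∈ S := by
    rw [coeff_C_mul, coeff_X]
    split_ifs <;> simpa
  exact ⟨C a * X 0, C a * X 1, fun p ↦ by simp, hcoeff 0, hcoeff 1⟩

lemma isPolyAutoOver_smul {S : Subfield ℂ} {a : ℂ} (ha : a ∈ S) (ha0 : a ≠ 0) :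
    IsPolyAutoOver S fun p ↦ (a * p.1, a * p.2) := by
  refine ⟨isPolyMapOver_smul S.zero_mem ha, fun p ↦ (a⁻¹ * p.1, a⁻¹ * p.2),
    isPolyMapOver_smul S.zero_mem (S.inv_mem ha), fun p ↦ ?_, fun p ↦ ?_⟩ <;>
  simp [ha0]

lemma smul_comp_henon {K : Type*} [CommRing K] {m : ℕ} {a D : K} (h : D * a ^ m = 1) :
    (fun p : K × K ↦ (a * p.1, a * p.2)) ∘ (fun p : K × K ↦ (p.2, p.1 + p.2 ^ (m + 1))) =
      (fun p : K × K ↦ (p.2, p.1 + D * p.2 ^ (m + 1))) ∘ fun p : K × K ↦ (a * p.1, a * p.2) := by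
  funext p
  simp only [Function.comp_apply, Prod.mk.injEq, true_and]
  linear_combination (-(a * p.2 ^ (m + 1))) * h

lemma ratCast_mul_pow_ne_one {m : ℕ} (hm : 0 < m) {D : ℤ} (hpow : ¬ ∃ k : ℤ, k ^ m = D) (c : ℚ) :
    (D : ℚ) * c ^ m ≠ 1 := by
  intro h
  have hx : ((c⁻¹ : ℚ) : ℝ) ^ m = D := by
    have : c⁻¹ ^ m = (D : ℚ) := by rw [inv_pow, ← eq_inv_of_mul_eq_one_left h]
    exact_mod_cast this
  by_cases hint : ∃ k : ℤ, ((c⁻¹ : ℚ) : ℝ) = k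
  · obtain ⟨k, hk⟩ := hint
    exact hpow ⟨k, by exact_mod_cast hk ▸ hx⟩
  · exact irrational_nrt_of_notint_nrt m D hx hint hm ⟨c⁻¹, rfl⟩

lemma mem_range_map_ratCast {P : MvPolynomial (Fin 2) ℂ}
    (hP : ∀ d, coeff d P ∈ Set.range ((↑) : ℚ → ℂ)) :
    P ∈ Set.range (MvPolynomial.map (Rat.castHom ℂ)) :=
  mem_range_map_iff_coeffs_subset.mpr fun c hc ↦ by
    obtain ⟨d, -, rfl⟩ := mem_coeffs_iff.mp hc
    exact hP d

theorem not_exists_ratPolyAutoOver_comp_eq {m D : ℕ} (hm : 0 < m) (hD : 0 < D)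
    (hpow : ¬ ∃ k : ℤ, k ^ m = (D : ℤ)) :
    ¬ ∃ ψ : ℂ × ℂ → ℂ × ℂ, IsPolyAutoOver (Set.range ((↑) : ℚ → ℂ)) ψ ∧
      ψ ∘ (fun p ↦ (p.2, p.1 + p.2 ^ (m + 1))) =
        (fun p ↦ (p.2, p.1 + (D : ℂ) * p.2 ^ (m + 1))) ∘ ψ := by
  rintro ⟨ψ, ⟨⟨P, Q, hψ, hP, hQ⟩, _, -, hleft, -⟩, hconj⟩
  obtain ⟨hPQ, hQP⟩ := henonPullback_eq_of_comp_eq hψ hconj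
  obtain ⟨P₀, rfl⟩ := mem_range_map_ratCast hP
  obtain ⟨Q₀, rfl⟩ := mem_range_map_ratCast hQ
  have hP₀ : ∀ c, P₀ ≠ C c := by
    rintro c rfl
    have hconst : ψ (0, 0) = ψ (1, 0) := by simp [hψ, ← hPQ]
    exact zero_ne_one (congrArg Prod.fst (hleft.injective hconst))
  have hrel : henonPullback (m + 1) (henonPullback (m + 1) P₀) =
      P₀ + C (D : ℚ) * henonPullback (m + 1) P₀ ^ (m + 1) := by
    refine MvPolynomial.map_injective _ (Rat.castHom ℂ).injective ?_
    simp only [map_henonPullback, map_add, map_mul, map_pow, map_C, hPQ, hQP]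
    simp
  obtain ⟨c, hc⟩ := exists_mul_pow_eq_one_of_henonPullback (by omega) (by positivity) hP₀ hrel
  exact ratCast_mul_pow_ne_one hm hpow c (by simpa using hc)

/-- For `m ≥ 2` and `D ≥ 1` not an `m`-th power of an integer, the
Hénon maps `f(x,y) = (y, x + y^{m+1})` and `g(x,y) = (y, x + D y^{m+1})` are conjugated
by `h(x,y) = (αx, αy)` with `α = D^{-1/m}` (so `α^m = 1/D`), a polynomial automorphism
with coefficients in `ℚ(D^{1/m})`; but no polynomial automorphism with rational
coefficients conjugates `f` to `g`. -/
theorem henon_conjugacy_field_of_definition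
    (m D : ℕ) (hm : 2 ≤ m) (hD : 0 < D) (hpow : ¬ ∃ k : ℤ, k ^ m = (D : ℤ)) :
    let f : ℂ × ℂ → ℂ × ℂ := fun p => (p.2, p.1 + p.2 ^ (m + 1))
    let g : ℂ × ℂ → ℂ × ℂ := fun p => (p.2, p.1 + (D : ℂ) * p.2 ^ (m + 1))
    let α : ℂ := (((D : ℝ) ^ (-(m : ℝ)⁻¹) : ℝ) : ℂ)
    let h : ℂ × ℂ → ℂ × ℂ := fun p => (α * p.1, α * p.2)
    α ^ m = 1 / (D : ℂ) ∧
    h ∘ f = g ∘ h ∧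
    IsPolyAutoOver (Subfield.closure {(((D : ℝ) ^ ((m : ℝ)⁻¹) : ℝ) : ℂ)} : Set ℂ) h ∧
    ¬ ∃ ψ : ℂ × ℂ → ℂ × ℂ,
        IsPolyAutoOver (Set.range ((↑) : ℚ → ℂ)) ψ ∧ ψ ∘ f = g ∘ ψ := by
  intro f g α h
  set β : ℝ := (D : ℝ) ^ ((m : ℝ)⁻¹)
  have hβ : 0 < β := Real.rpow_pos_of_pos (Nat.cast_pos.mpr hD) _
  have hαβ : α = (β : ℂ)⁻¹ := by
    rw [← Complex.ofReal_inv, ← Real.rpow_neg (Nat.cast_nonneg D)]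
  have hα : α ^ m = 1 / (D : ℂ) := by
    rw [hαβ, inv_pow, ← Complex.ofReal_pow, Real.rpow_inv_natCast_pow (Nat.cast_nonneg D)
      (by omega)]
    simp
  refine ⟨hα, smul_comp_henon ?_, ?_, not_exists_ratPolyAutoOver_comp_eq (by omega) hD hpow⟩
  · rw [hα, mul_one_div_cancel (Nat.cast_ne_zero.mpr hD.ne')]
  · refine isPolyAutoOver_smul (hαβ ▸ inv_mem (Subfield.subset_closure rfl)) ?_
    exact hαβ ▸ inv_ne_zero (Complex.ofReal_ne_zero.mpr hβ.ne')
end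
end

section
/- Let f be a generalized Hénon map and let p ∈ ℂ² be a point lying neither in K_f⁺ nor in K_f⁻. Then there exists ε > 0 such that the open ball U = B(p, ε) is wandering for f: fⁿ(U) ∩ U = ∅ for every integer n ≠ 0. -/
open Filter MvPolynomial

noncomputable section

/-- The `n`-th iterate of a bijection `f`, for `n : ℤ` (negative iterates use the
inverse map). -/
def zIter (f : ℂ × ℂ → ℂ × ℂ) (n : ℤ) : ℂ × ℂ → ℂ × ℂ :=
  if 0 ≤ n then f^[n.toNat] else (Function.invFun f)^[(-n).toNat]

/-!
For every large `R`, a generalized Hénon map sends the open region `|x| > R, |y| < |x|` into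
itself (there the polynomial term dominates), while an orbit that never enters it stays within
radius `max R ‖p‖`. So if the forward orbit of `p` is unbounded, `p` is not periodic and, taking
`R > ‖p‖`, some iterate `f^M p` lies in this region, which stays away from `p`. By continuity `f^M`
maps a small ball around `p` into the region, so `f^n` of the ball misses it for all `n ≥ M`; the
finitely many times `0 < n < M` are handled by `f^n p ≠ p`. Negative times follow by applying
`f^n` to `f^(-n)`.
-/

open Set Function Metric Topology

section Wandering

variable {X : Type*} [MetricSpace X]

lemma eventually_disjoint_image_ball {g : X → X} {p : X} (hg : ContinuousAt g p)
    (hgp : g p ≠ p) : ∀ᶠ ε in 𝓝[>] (0 : ℝ), Disjoint (g '' ball p ε) (ball p ε) := by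
  obtain ⟨U, V, hU, hV, hUV⟩ := t2_separation_nhds hgp
  filter_upwards [nhdsWithin_le_nhds (eventually_ball_subset (inter_mem (hg hU) hV))] with ε hε
  exact hUV.mono (image_subset_iff.2 fun x hx => (hε hx).1) fun x hx => (hε hx).2

theorem exists_ball_disjoint_image_iterate {f : X → X} (hf : Continuous f) {p : X}
    (hp : p ∉ periodicPts f) {E : Set X} (hE : IsOpen E) (hfE : MapsTo f E E)
    (hpE : p ∉ closure E) {M : ℕ} (hM : f^[M] p ∈ E) :
    ∃ ε > 0, ∀ n, 0 < n → Disjoint (f^[n] '' ball p ε) (ball p ε) := by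
  have hfar : ∀ᶠ ε in 𝓝[>] (0 : ℝ), ∀ n, M ≤ n → Disjoint (f^[n] '' ball p ε) (ball p ε) := by
    have hW : f^[M] ⁻¹' E ∩ Eᶜ ∈ 𝓝 p :=
      inter_mem ((hf.iterate M).continuousAt.preimage_mem_nhds (hE.mem_nhds hM))
        (mem_of_superset (isClosed_closure.isOpen_compl.mem_nhds hpE)
          (compl_subset_compl.2 subset_closure))
    filter_upwards [nhdsWithin_le_nhds (eventually_ball_subset hW)] with ε hε n hn
    refine disjoint_compl_right.mono ?_ fun x hx => (hε hx).2
    rintro _ ⟨x, hx, rfl⟩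
    rw [← Nat.sub_add_cancel hn, iterate_add_apply]
    exact hfE.iterate _ (hε hx).1
  have hnear : ∀ᶠ ε in 𝓝[>] (0 : ℝ),
      ∀ n ∈ Finset.Ioo 0 M, Disjoint (f^[n] '' ball p ε) (ball p ε) := by
    refine (eventually_all_finset _).2 fun n hn => ?_
    exact eventually_disjoint_image_ball (hf.iterate n).continuousAt
      fun h => hp (mk_mem_periodicPts (Finset.mem_Ioo.1 hn).1 h)
  obtain ⟨ε, ⟨hfar, hnear⟩, hε⟩ := ((hfar.and hnear).and self_mem_nhdsWithin).exists
  refine ⟨ε, hε, fun n hn => ?_⟩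
  rcases lt_or_ge n M with hnM | hnM
  · exact hnear n (Finset.mem_Ioo.2 ⟨hn, hnM⟩)
  · exact hfar n hnM

end Wandering

lemma notMem_periodicPts_of_not_isBounded {X : Type*} [Bornology X] {f : X → X} {p : X}
    (hp : ¬Bornology.IsBounded (range fun n => f^[n] p)) : p ∉ periodicPts f := by
  rintro ⟨k, hk, hper⟩
  refine hp ((finite_range fun m : Fin k => f^[m] p).isBounded.subset ?_)
  rintro _ ⟨n, rfl⟩
  exact ⟨⟨n % k, Nat.mod_lt n hk⟩, hper.iterate_mod_apply n⟩

lemma disjoint_image_of_leftInverse {α : Type*} {g h : α → α} (hgh : LeftInverse h g)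
    {s : Set α} (hs : Disjoint (h '' s) s) : Disjoint (g '' s) s := by
  rw [Set.disjoint_left] at hs ⊢
  rintro _ ⟨u, hu, rfl⟩ hgu
  exact hs ⟨g u, hgu, hgh u⟩ hu

lemma List.foldr_comp_induction {α : Type*} {P : (α → α) → Prop} (hid : P id)
    (hcomp : ∀ g h, P g → P h → P (g ∘ h)) :
    ∀ {l : List (α → α)}, (∀ g ∈ l, P g) → P (l.foldr (· ∘ ·) id)
  | [], _ => hid
  | g :: _, hl => hcomp g _ (hl g mem_cons_self)
      (foldr_comp_induction hid hcomp fun h hh => hl h (mem_cons_of_mem g hh))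

section Filtration

variable {E : Type*} [SeminormedAddGroup E]

/-- Abstracts the filtration property of Hénon maps (Bedford–Smillie). -/
structure FiltrationProperty (V : Set E) (R : ℝ) (g : E → E) : Prop where
  mapsTo : MapsTo g V V
  mem_or_norm_le : ∀ q, g q ∈ V ∨ ‖g q‖ ≤ max R ‖q‖

variable {V : Set E} {R : ℝ}

lemma FiltrationProperty.id : FiltrationProperty V R id :=
  ⟨mapsTo_id V, fun _ => Or.inr (le_max_right _ _)⟩

lemma FiltrationProperty.comp {g h : E → E} (hg : FiltrationProperty V R g)
    (hh : FiltrationProperty V R h) : FiltrationProperty V R (g ∘ h) where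
  mapsTo := hg.mapsTo.comp hh.mapsTo
  mem_or_norm_le q := (hh.mem_or_norm_le q).elim (fun hq => Or.inl (hg.mapsTo hq)) fun hq =>
    (hg.mem_or_norm_le (h q)).imp_right fun hgq => hgq.trans (max_le (le_max_left _ _) hq)

lemma FiltrationProperty.exists_iterate_mem {f : E → E} (hf : FiltrationProperty V R f) {p : E}
    (hp : ¬Bornology.IsBounded (range fun n => f^[n] p)) : ∃ n, f^[n] p ∈ V := by
  by_contra! hV
  refine hp (isBounded_iff_forall_norm_le.2 ⟨max R ‖p‖, forall_mem_range.2 fun n => ?_⟩)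
  induction n with
  | zero => exact le_max_right _ _
  | succ n ih =>
    have hn := hV (n + 1)
    rw [iterate_succ_apply'] at hn ⊢
    exact ((hf.mem_or_norm_le _).resolve_left hn).trans (max_le (le_max_left _ _) ih)

/-- The interior of Bedford–Smillie's region `V⁺ = {|x| ≥ R, |y| ≤ |x|}`. -/
def escapeRegion (R : ℝ) : Set (E × E) := {q | R < ‖q.1‖ ∧ ‖q.2‖ < ‖q.1‖}

lemma isOpen_escapeRegion : IsOpen (escapeRegion (E := E) R) :=
  (isOpen_lt continuous_const continuous_fst.norm).inter
    (isOpen_lt continuous_snd.norm continuous_fst.norm)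

lemma notMem_closure_escapeRegion {p : E × E} (hp : ‖p‖ < R) : p ∉ closure (escapeRegion R) :=
  fun h => (closure_minimal (fun _ hq => hq.1.le)
    (isClosed_le continuous_const continuous_fst.norm) h : R ≤ ‖p.1‖).not_gt
      ((norm_fst_le p).trans_lt hp)

lemma filtrationProperty_escapeRegion {g : E × E → E × E} (hsnd : ∀ q, (g q).2 = q.1)
    (hg : MapsTo g (escapeRegion R) (escapeRegion R)) :
    FiltrationProperty (escapeRegion R) R g := by
  refine ⟨hg, fun q => or_iff_not_imp_left.2 fun hq => ?_⟩
  simp only [escapeRegion, mem_ofPred_eq, not_and_or, not_lt, hsnd] at hq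
  rw [Prod.norm_def, hsnd]
  have hq1 := norm_fst_le q
  refine max_le ?_ (hq1.trans (le_max_right _ _))
  rcases hq with hq | hq
  · exact hq.trans (le_max_left _ _)
  · exact hq.trans (hq1.trans (le_max_right _ _))

end Filtration

lemma Polynomial.eventually_mul_norm_le_norm_eval {𝕜 : Type*} [NormedField 𝕜]
    {P : Polynomial 𝕜} (hP : 2 ≤ P.natDegree) (C : ℝ) :
    ∀ᶠ x in Bornology.cobounded 𝕜, C * ‖x‖ ≤ ‖P.eval x‖ := by
  have hdeg : 0 < P.divX.degree := by
    rw [← natDegree_pos_iff_degree_pos, natDegree_divX_eq_natDegree_tsub_one]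
    omega
  filter_upwards
    [(P.divX.tendsto_norm_atTop hdeg tendsto_norm_cobounded_atTop).eventually_ge_atTop (C + 1),
      eventually_cobounded_le_norm ‖P.coeff 0‖] with x hq hx
  calc C * ‖x‖ ≤ ‖P.divX.eval x‖ * ‖x‖ - ‖P.coeff 0‖ := by nlinarith [norm_nonneg x]
    _ ≤ ‖P.divX.eval x * x + P.coeff 0‖ := by rw [← norm_mul]; exact norm_sub_le_norm_add _ _
    _ = ‖P.eval x‖ := by simpa using congr(‖Polynomial.eval x $(P.divX_mul_X_add)‖)

namespace IsElementaryHenon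

variable {g : ℂ × ℂ → ℂ × ℂ}

lemma continuous (hg : IsElementaryHenon g) : Continuous g := by
  obtain ⟨a, P, -, -, hgP⟩ := hg
  rw [funext hgP]
  fun_prop

lemma surjective (hg : IsElementaryHenon g) : Surjective g := by
  obtain ⟨a, P, ha, -, hgP⟩ := hg
  intro q
  refine ⟨(q.2, (q.1 - P.eval q.2) / a), ?_⟩
  rw [hgP]
  ext <;> simp [mul_div_cancel₀ _ ha]

lemma eventually_filtrationProperty (hg : IsElementaryHenon g) :
    ∀ᶠ R in atTop, FiltrationProperty (escapeRegion R) R g := by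
  obtain ⟨a, P, -, hP, hgP⟩ := hg
  obtain ⟨R₀, -, hR₀⟩ := Filter.hasBasis_cobounded_norm.eventually_iff.1
    (P.eventually_mul_norm_le_norm_eval hP (2 + ‖a‖))
  filter_upwards [eventually_ge_atTop R₀, eventually_ge_atTop 0] with R hR hR0
  refine filtrationProperty_escapeRegion (fun q => by rw [hgP]) fun q ⟨hq1, hq2⟩ => ?_
  have hgrow : 2 * ‖q.1‖ ≤ ‖a * q.2 + P.eval q.1‖ :=
    calc 2 * ‖q.1‖ = (2 + ‖a‖) * ‖q.1‖ - ‖a‖ * ‖q.1‖ := by ring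
      _ ≤ ‖P.eval q.1‖ - ‖a * q.2‖ := by
        rw [norm_mul]
        gcongr
        exact hR₀ (hR.trans hq1.le)
      _ ≤ ‖a * q.2 + P.eval q.1‖ := by rw [add_comm]; exact norm_sub_le_norm_add _ _
  rw [hgP]
  exact ⟨by linarith, by linarith⟩

end IsElementaryHenon

namespace IsHenon

variable {f : ℂ × ℂ → ℂ × ℂ}

lemma continuous (hf : IsHenon f) : Continuous f := by
  obtain ⟨l, -, hl, rfl⟩ := hf
  exact List.foldr_comp_induction continuous_id (fun _ _ => .comp)
    fun g hg => (hl g hg).continuous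

lemma surjective (hf : IsHenon f) : Surjective f := by
  obtain ⟨l, -, hl, rfl⟩ := hf
  exact List.foldr_comp_induction surjective_id (fun _ _ => .comp)
    fun g hg => (hl g hg).surjective

lemma eventually_filtrationProperty (hf : IsHenon f) :
    ∀ᶠ R in atTop, FiltrationProperty (escapeRegion R) R f := by
  obtain ⟨l, -, hl, rfl⟩ := hf
  exact List.foldr_comp_induction (.of_forall fun _ => .id)
    (fun _ _ hg hh => (hg.and hh).mono fun _ h => h.1.comp h.2)
    fun g hg => (hl g hg).eventually_filtrationProperty

end IsHenon

lemma zIter_natCast (f : ℂ × ℂ → ℂ × ℂ) (k : ℕ) : zIter f k = f^[k] := by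
  simp [zIter]

lemma zIter_neg_natCast (f : ℂ × ℂ → ℂ × ℂ) {k : ℕ} (hk : 0 < k) :
    zIter f (-k) = (invFun f)^[k] := by
  simp [zIter, hk.ne']

/-- If `f` is a generalized Hénon map and `p ∉ K_f⁺ ∪ K_f⁻`, then
some small ball around `p` is wandering: `fⁿ(U) ∩ U = ∅` for every integer `n ≠ 0`. -/
theorem wandering_ball_outside_K
    (f : ℂ × ℂ → ℂ × ℂ) (hf : IsHenon f) (p : ℂ × ℂ)
    (hp : p ∉ Kplus f ∪ Kminus f) :
    ∃ ε > 0, ∀ n : ℤ, n ≠ 0 →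
      zIter f n '' Metric.ball p ε ∩ Metric.ball p ε = ∅ := by
  have hpK : ¬Bornology.IsBounded (range fun n => f^[n] p) := fun h => hp (Or.inl h)
  obtain ⟨R, hfR, hpR⟩ := (hf.eventually_filtrationProperty.and (eventually_gt_atTop ‖p‖)).exists
  obtain ⟨M, hM⟩ := hfR.exists_iterate_mem hpK
  obtain ⟨ε, hε, hdisj⟩ := exists_ball_disjoint_image_iterate hf.continuous
    (notMem_periodicPts_of_not_isBounded hpK) isOpen_escapeRegion hfR.mapsTo
    (notMem_closure_escapeRegion hpR) hM
  refine ⟨ε, hε, fun n hn => disjoint_iff_inter_eq_empty.1 ?_⟩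
  obtain ⟨k, rfl | rfl⟩ := n.eq_nat_or_neg
  · rw [zIter_natCast]
    exact hdisj k (by omega)
  · have hk : 0 < k := by omega
    rw [zIter_neg_natCast f hk]
    exact disjoint_image_of_leftInverse ((rightInverse_invFun hf.surjective).iterate k)
      (hdisj k hk)
end
end
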